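/- Let P ∈ P_m(ℂ^{n×n}) be a regular matrix polynomial of degree m ≥ 1, and let L(z) = zX + Y with X, Y ∈ ℂ^{mn×mn} be a pencil in 𝕃₁(P) with right ansatz vector v ∈ ℂ^m of norm ‖v‖₂ = 1, i.e. L(λ)·(Λ_{m−1} ⊗ I_n) = v ⊗ P(λ) for every λ ∈ ℂ. Then for every λ ∈ ℂ and x ∈ ℂⁿ with x^H x = 1, sqrt((m+1)/(2m)) · η(λ, x, P) ≤ η(λ, Λ_{m−1} ⊗ x, L) ≤ η(λ, x, P), where Λ_{m−1} := (λ^{m−1}, …, λ, 1)ᵀ. -/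

import Mathlib

open scoped ComplexConjugate
open Matrix

noncomputable section

variable {ι : Type*} [Fintype ι] [DecidableEq ι]

/-- Evaluation of the matrix polynomial with coefficient list `A` at the point `z`. -/
def polyEval {m : ℕ} (A : Fin (m+1) → Matrix ι ι ℂ) (z : ℂ) : Matrix ι ι ℂ :=
  ∑ j : Fin (m+1), z ^ (j : ℕ) • A j

/-- Squared Euclidean norm of a complex vector. -/
def vecNormSq (x : ι → ℂ) : ℝ := ∑ i, ‖x i‖ ^ 2

/-- Euclidean norm of a complex vector. -/
def vecNorm (x : ι → ℂ) : ℝ := Real.sqrt (vecNormSq x)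

/-- `‖(1, z, …, z^m)‖₂²`. -/
def lamNormSq (m : ℕ) (z : ℂ) : ℝ := ∑ j : Fin (m+1), ‖z ^ (j : ℕ)‖ ^ 2

/-- Squared Frobenius norm of a matrix. -/
def frobNormSq (M : Matrix ι ι ℂ) : ℝ := ∑ i, ∑ k, ‖M i k‖ ^ 2

/-- Spectral (operator 2-) norm of a matrix. -/
def specNorm (M : Matrix ι ι ℂ) : ℝ := ‖Matrix.toEuclideanCLM (𝕜 := ℂ) M‖

/-- Frobenius norm of a matrix polynomial: `(Σ_j ‖A_j‖_F²)^{1/2}`. -/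
def polyNormF {m : ℕ} (A : Fin (m+1) → Matrix ι ι ℂ) : ℝ :=
  Real.sqrt (∑ j, frobNormSq (A j))

/-- Spectral norm of a matrix polynomial: `(Σ_j ‖A_j‖₂²)^{1/2}`. -/
def polyNorm2 {m : ℕ} (A : Fin (m+1) → Matrix ι ι ℂ) : ℝ :=
  Real.sqrt (∑ j, specNorm (A j) ^ 2)

/-- Structured backward error of `(lam, x)` as an approximate eigenpair of the matrix
polynomial `A`, with respect to the polynomial norm `N` and the structure class `S`. -/
def eta {m : ℕ} (N : (Fin (m+1) → Matrix ι ι ℂ) → ℝ)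
    (S : Set (Fin (m+1) → Matrix ι ι ℂ)) (lam : ℂ) (x : ι → ℂ)
    (A : Fin (m+1) → Matrix ι ι ℂ) : ℝ :=
  sInf {t | ∃ ΔA ∈ S, (polyEval A lam + polyEval ΔA lam) *ᵥ x = 0 ∧ t = N ΔA}

/-- A matrix polynomial is regular if `det P(z) ≠ 0` for some `z`. -/
def Regular {m : ℕ} (A : Fin (m+1) → Matrix ι ι ℂ) : Prop :=
  ∃ z : ℂ, (polyEval A z).det ≠ 0


/-- The Kronecker product of two vectors. -/
def kronVec {m' n : ℕ} (v : Fin m' → ℂ) (x : Fin n → ℂ) : Fin m' × Fin n → ℂ :=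
  fun p => v p.1 * x p.2

/-- `Λ_{m−1}(z) = (z^{m−1}, …, z, 1)ᵀ`. -/
def lamVec (m : ℕ) (z : ℂ) : Fin m → ℂ := fun i => z ^ (m - 1 - (i : ℕ))

/-- The pencil `L(z) = zX + Y`, encoded by its coefficient list `B` with `B 0 = Y`,
`B 1 = X`, lies in `𝕃₁(P)` with right ansatz vector `v`:
`L(z)·(Λ_{m−1} ⊗ I_n) = v ⊗ P(z)` for all `z` (stated via the action on vectors). -/
def InL1 {n m : ℕ} (A : Fin (m+1) → Matrix (Fin n) (Fin n) ℂ)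
    (B : Fin (1+1) → Matrix (Fin m × Fin n) (Fin m × Fin n) ℂ) (v : Fin m → ℂ) : Prop :=
  ∀ (z : ℂ) (u : Fin n → ℂ),
    polyEval B z *ᵥ kronVec (lamVec m z) u = kronVec v (polyEval A z *ᵥ u)

/-! The backward error of an approximate eigenpair `(λ, w)` of a matrix polynomial has the closed
form `‖P(λ) w‖ / (‖(1, λ, …, λ^m)‖ ‖w‖)` for every coefficient norm lying between the spectral and
the Frobenius norm: Cauchy–Schwarz bounds every admissible perturbation from below, and a rank-one
perturbation `ΔA_j ∝ conj(λ)^j · P(λ) w wᴴ` attains the bound.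

For `L ∈ 𝕃₁(P)` the residual `L(λ)(Λ ⊗ x) = v ⊗ P(λ)x` has the same norm as `P(λ)x`, so with
`t = |λ|²` the two backward errors differ exactly by the factor
`√((1 + t + ⋯ + t^m) / ((1 + t)(1 + t + ⋯ + t^(m-1))))`.
This lies between `√((m+1)/(2m))` and `1`, the lower bound coming from
`t^k + t^(m-k) ≤ 1 + t^m`. -/

open WithLp Finset

section Vectors

variable {κ : Type*} [Fintype κ]

lemma vecNorm_eq_norm_toLp (x : κ → ℂ) : vecNorm x = ‖toLp 2 x‖ := by
  rw [EuclideanSpace.norm_eq]; rfl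

lemma star_dotProduct_self_eq_norm_sq (x : κ → ℂ) : star x ⬝ᵥ x = (‖toLp 2 x‖ : ℂ) ^ 2 := by
  rw [dotProduct_comm, ← EuclideanSpace.inner_toLp_toLp]
  exact inner_self_eq_norm_sq_to_K _

end Vectors

lemma norm_kronVec {m' n : ℕ} (a : Fin m' → ℂ) (b : Fin n → ℂ) :
    ‖toLp 2 (kronVec a b)‖ = ‖toLp 2 a‖ * ‖toLp 2 b‖ := by
  rw [← sq_eq_sq₀ (norm_nonneg _) (by positivity), mul_pow]
  simp only [EuclideanSpace.norm_sq_eq, kronVec, Fintype.sum_prod_type, norm_mul, mul_pow,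
    sum_mul_sum]

lemma norm_lamVec_sq (m : ℕ) (z : ℂ) :
    ‖toLp 2 (lamVec m z)‖ ^ 2 = ∑ i ∈ range m, (‖z‖ ^ 2) ^ i := by
  rw [EuclideanSpace.norm_sq_eq, ← sum_range_reflect, ← Fin.sum_univ_eq_sum_range]
  simp only [lamVec, norm_pow, ← pow_mul, mul_comm]

lemma lamNormSq_eq_geom_sum (m : ℕ) (z : ℂ) :
    lamNormSq m z = ∑ i ∈ range (m + 1), (‖z‖ ^ 2) ^ i := by
  rw [lamNormSq, Fin.sum_univ_eq_sum_range (fun i => ‖z ^ i‖ ^ 2)]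
  simp only [norm_pow, ← pow_mul, mul_comm]

lemma lamNormSq_pos (m : ℕ) (z : ℂ) : 0 < lamNormSq m z := by
  rw [lamNormSq_eq_geom_sum]
  exact geom_sum_pos (by positivity) m.succ_ne_zero

lemma sum_pow_mul_conj_pow (m : ℕ) (z : ℂ) :
    ∑ j : Fin (m+1), z ^ (j : ℕ) * conj z ^ (j : ℕ) = (lamNormSq m z : ℂ) := by
  simp only [lamNormSq, ← map_pow, Complex.mul_conj', Complex.ofReal_sum, Complex.ofReal_pow]

def scaledResidual {κ : Type*} [Fintype κ] {m : ℕ} (A : Fin (m+1) → Matrix κ κ ℂ) (z : ℂ)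
    (w : κ → ℂ) : ℝ :=
  ‖toLp 2 (polyEval A z *ᵥ w)‖ / (√(lamNormSq m z) * ‖toLp 2 w‖)

section BackwardError

attribute [local instance] Matrix.frobeniusNormedAddCommGroup Matrix.frobeniusNormedSpace

variable {κ : Type*} [Fintype κ] {m : ℕ}

lemma frobNormSq_eq_norm_sq (M : Matrix κ κ ℂ) : frobNormSq M = ‖M‖ ^ 2 := by
  change _ = ‖toLp 2 fun i => toLp 2 fun j => M i j‖ ^ 2
  simp only [PiLp.norm_sq_eq_of_L2, frobNormSq]

lemma norm_toLp_mulVec_le_frobenius (M : Matrix κ κ ℂ) (z : κ → ℂ) :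
    ‖toLp 2 (M *ᵥ z)‖ ≤ ‖M‖ * ‖toLp 2 z‖ := by
  rw [← Matrix.frobenius_norm_replicateCol (ι := Unit),
    ← Matrix.frobenius_norm_replicateCol (ι := Unit), Matrix.replicateCol_mulVec]
  exact Matrix.frobenius_norm_mul _ _

lemma frobenius_norm_vecMulVec_le (y w : κ → ℂ) :
    ‖Matrix.vecMulVec y w‖ ≤ ‖toLp 2 y‖ * ‖toLp 2 w‖ := by
  rw [Matrix.vecMulVec_eq Unit, ← Matrix.frobenius_norm_replicateCol (ι := Unit),
    ← Matrix.frobenius_norm_replicateRow (ι := Unit)]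
  exact Matrix.frobenius_norm_mul _ _

lemma norm_toLp_mulVec_le_specNorm [DecidableEq κ] (M : Matrix κ κ ℂ) (z : κ → ℂ) :
    ‖toLp 2 (M *ᵥ z)‖ ≤ specNorm M * ‖toLp 2 z‖ :=
  (Matrix.toEuclideanCLM (𝕜 := ℂ) M).le_opNorm (toLp 2 z)

lemma specNorm_le_frobenius [DecidableEq κ] (M : Matrix κ κ ℂ) : specNorm M ≤ ‖M‖ :=
  ContinuousLinearMap.opNorm_le_bound _ (norm_nonneg _) fun z =>
    norm_toLp_mulVec_le_frobenius M (ofLp z)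

lemma norm_polyEval_mulVec_le (nrm : Matrix κ κ ℂ → ℝ)
    (hmulVec : ∀ M z, ‖toLp 2 (M *ᵥ z)‖ ≤ nrm M * ‖toLp 2 z‖)
    (A : Fin (m+1) → Matrix κ κ ℂ) (z : ℂ) (w : κ → ℂ) :
    ‖toLp 2 (polyEval A z *ᵥ w)‖ ≤ √(lamNormSq m z) * √(∑ j, nrm (A j) ^ 2) * ‖toLp 2 w‖ := by
  have hexp : polyEval A z *ᵥ w = ∑ j : Fin (m+1), z ^ (j : ℕ) • (A j *ᵥ w) := by
    simp only [polyEval, Matrix.sum_mulVec, Matrix.smul_mulVec]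
  calc ‖toLp 2 (polyEval A z *ᵥ w)‖
      ≤ ∑ j : Fin (m+1), ‖z ^ (j : ℕ)‖ * (nrm (A j) * ‖toLp 2 w‖) := by
        rw [hexp, WithLp.toLp_sum]
        refine (norm_sum_le _ _).trans (sum_le_sum fun j _ => ?_)
        rw [WithLp.toLp_smul, norm_smul]
        exact mul_le_mul_of_nonneg_left (hmulVec _ _) (norm_nonneg _)
    _ = (∑ j : Fin (m+1), ‖z ^ (j : ℕ)‖ * nrm (A j)) * ‖toLp 2 w‖ := by
        simp only [sum_mul, mul_assoc]
    _ ≤ √(lamNormSq m z) * √(∑ j, nrm (A j) ^ 2) * ‖toLp 2 w‖ := by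
        gcongr
        exact Real.sum_mul_le_sqrt_mul_sqrt _ _ _

lemma scaledResidual_le_of_mulVec_eq_zero (nrm : Matrix κ κ ℂ → ℝ)
    (hmulVec : ∀ M z, ‖toLp 2 (M *ᵥ z)‖ ≤ nrm M * ‖toLp 2 z‖)
    {A ΔA : Fin (m+1) → Matrix κ κ ℂ} {z : ℂ} {w : κ → ℂ} (hw : w ≠ 0)
    (hΔA : (polyEval A z + polyEval ΔA z) *ᵥ w = 0) :
    scaledResidual A z w ≤ √(∑ j, nrm (ΔA j) ^ 2) := by
  have hΛ : 0 < √(lamNormSq m z) := Real.sqrt_pos.2 (lamNormSq_pos m z)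
  have hW : 0 < ‖toLp 2 w‖ := by simpa using hw
  rw [scaledResidual, div_le_iff₀ (by positivity)]
  have hneg : polyEval A z *ᵥ w = -(polyEval ΔA z *ᵥ w) :=
    eq_neg_of_add_eq_zero_left (by rwa [Matrix.add_mulVec] at hΔA)
  calc ‖toLp 2 (polyEval A z *ᵥ w)‖ = ‖toLp 2 (polyEval ΔA z *ᵥ w)‖ := by
        rw [hneg, WithLp.toLp_neg, norm_neg]
    _ ≤ _ := norm_polyEval_mulVec_le nrm hmulVec ΔA z w
    _ = _ := by ring

def minimalPerturbation (A : Fin (m+1) → Matrix κ κ ℂ) (z : ℂ) (w : κ → ℂ) :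
    Fin (m+1) → Matrix κ κ ℂ :=
  fun j => (-(conj z ^ (j : ℕ) / (lamNormSq m z * ‖toLp 2 w‖ ^ 2 : ℝ))) •
    Matrix.vecMulVec (polyEval A z *ᵥ w) (star w)

lemma polyEval_minimalPerturbation_mulVec (A : Fin (m+1) → Matrix κ κ ℂ) (z : ℂ) {w : κ → ℂ}
    (hw : w ≠ 0) : polyEval (minimalPerturbation A z w) z *ᵥ w = -(polyEval A z *ᵥ w) := by
  have hD : ((lamNormSq m z * ‖toLp 2 w‖ ^ 2 : ℝ) : ℂ) ≠ 0 := by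
    have : 0 < ‖toLp 2 w‖ := by simpa using hw
    exact_mod_cast (mul_pos (lamNormSq_pos m z) (by positivity)).ne'
  rw [polyEval]
  simp only [minimalPerturbation, Matrix.smul_mulVec, Matrix.vecMulVec_mulVec, op_smul_eq_smul,
    smul_smul, ← sum_smul, star_dotProduct_self_eq_norm_sq]
  rw [← neg_one_smul ℂ (polyEval A z *ᵥ w)]
  congr 1
  simp only [mul_neg, sum_neg_distrib, ← mul_div_assoc, ← sum_div, sum_pow_mul_conj_pow]
  field_simp
  push_cast
  ring

lemma norm_minimalPerturbation_le (A : Fin (m+1) → Matrix κ κ ℂ) (z : ℂ) {w : κ → ℂ}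
    (hw : w ≠ 0) (j : Fin (m+1)) :
    ‖minimalPerturbation A z w j‖ ≤
      ‖z ^ (j : ℕ)‖ * (‖toLp 2 (polyEval A z *ᵥ w)‖ / (lamNormSq m z * ‖toLp 2 w‖)) := by
  have hΛ := lamNormSq_pos m z
  have hW : 0 < ‖toLp 2 w‖ := by simpa using hw
  have hstar : ‖toLp 2 (star w)‖ = ‖toLp 2 w‖ := by simp [EuclideanSpace.norm_eq]
  calc ‖minimalPerturbation A z w j‖
      ≤ ‖z ^ (j : ℕ)‖ / (lamNormSq m z * ‖toLp 2 w‖ ^ 2) *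
          (‖toLp 2 (polyEval A z *ᵥ w)‖ * ‖toLp 2 w‖) := by
        rw [minimalPerturbation, norm_smul, norm_neg, norm_div, Complex.norm_real, ← map_pow,
          Complex.norm_conj, Real.norm_of_nonneg (by positivity), ← hstar]
        gcongr
        exact frobenius_norm_vecMulVec_le _ _
    _ = _ := by field_simp

theorem eta_eq_scaledResidual (nrm : Matrix κ κ ℂ → ℝ) (hnonneg : ∀ M, 0 ≤ nrm M)
    (hmulVec : ∀ M z, ‖toLp 2 (M *ᵥ z)‖ ≤ nrm M * ‖toLp 2 z‖) (hfrob : ∀ M, nrm M ≤ ‖M‖)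
    (A : Fin (m+1) → Matrix κ κ ℂ) (z : ℂ) {w : κ → ℂ} (hw : w ≠ 0) :
    eta (fun ΔA => √(∑ j, nrm (ΔA j) ^ 2)) Set.univ z w A = scaledResidual A z w := by
  have hΛ := lamNormSq_pos m z
  have hW : 0 < ‖toLp 2 w‖ := by simpa using hw
  have hcancel : (polyEval A z + polyEval (minimalPerturbation A z w) z) *ᵥ w = 0 := by
    rw [Matrix.add_mulVec, polyEval_minimalPerturbation_mulVec A z hw, add_neg_cancel]
  have hattained : √(∑ j, nrm (minimalPerturbation A z w j) ^ 2) ≤ scaledResidual A z w := by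
    calc √(∑ j, nrm (minimalPerturbation A z w j) ^ 2)
        ≤ √(∑ j : Fin (m+1), (‖z ^ (j : ℕ)‖ *
            (‖toLp 2 (polyEval A z *ᵥ w)‖ / (lamNormSq m z * ‖toLp 2 w‖))) ^ 2) := by
          gcongr with j
          · exact hnonneg _
          · exact (hfrob _).trans (norm_minimalPerturbation_le A z hw j)
      _ = scaledResidual A z w := by
          simp_rw [mul_pow]
          rw [← sum_mul, ← lamNormSq, Real.sqrt_mul hΛ.le, Real.sqrt_sq (by positivity),
            scaledResidual]
          nth_rw 2 [← Real.sq_sqrt hΛ.le]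
          field_simp
  refine IsLeast.csInf_eq ⟨⟨_, Set.mem_univ _, hcancel, ?_⟩, ?_⟩
  · exact le_antisymm (scaledResidual_le_of_mulVec_eq_zero nrm hmulVec hw hcancel) hattained
  · rintro _ ⟨ΔA, -, hΔA, rfl⟩
    exact scaledResidual_le_of_mulVec_eq_zero nrm hmulVec hw hΔA

theorem eta_polyNormF_eq_scaledResidual (A : Fin (m+1) → Matrix κ κ ℂ) (z : ℂ) {w : κ → ℂ}
    (hw : w ≠ 0) : eta polyNormF Set.univ z w A = scaledResidual A z w := by
  have hF : (polyNormF : (Fin (m+1) → Matrix κ κ ℂ) → ℝ) = fun ΔA => √(∑ j, ‖ΔA j‖ ^ 2) := by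
    funext ΔA
    simp only [polyNormF, frobNormSq_eq_norm_sq]
  rw [hF]
  exact eta_eq_scaledResidual (‖·‖) norm_nonneg norm_toLp_mulVec_le_frobenius (fun _ => le_rfl)
    A z hw

theorem eta_polyNorm2_eq_scaledResidual [DecidableEq κ] (A : Fin (m+1) → Matrix κ κ ℂ) (z : ℂ)
    {w : κ → ℂ} (hw : w ≠ 0) : eta polyNorm2 Set.univ z w A = scaledResidual A z w :=
  eta_eq_scaledResidual specNorm (fun _ => norm_nonneg _) norm_toLp_mulVec_le_specNorm
    specNorm_le_frobenius A z hw

end BackwardError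

lemma one_add_mul_geom_sum_eq {R : Type*} [CommRing R] (t : R) (m : ℕ) :
    (1 + t) * ∑ i ∈ range m, t ^ i = 2 * ∑ i ∈ range (m + 1), t ^ i - 1 - t ^ m := by
  rw [two_mul]
  nth_rw 1 [geom_sum_succ]
  rw [geom_sum_succ']
  ring

section GeomSum

variable {α : Type*} [CommRing α] [LinearOrder α] [IsStrictOrderedRing α] {t : α}

lemma one_le_geom_sum (ht : 0 ≤ t) {n : ℕ} (hn : n ≠ 0) : 1 ≤ ∑ i ∈ range n, t ^ i := by
  obtain ⟨k, rfl⟩ := Nat.exists_eq_succ_of_ne_zero hn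
  rw [geom_sum_succ]
  exact le_add_of_nonneg_left (mul_nonneg ht (sum_nonneg fun i _ => pow_nonneg ht i))

lemma geom_sum_succ_le_one_add_mul (ht : 0 ≤ t) {m : ℕ} (hm : m ≠ 0) :
    ∑ i ∈ range (m + 1), t ^ i ≤ (1 + t) * ∑ i ∈ range m, t ^ i := by
  rw [geom_sum_succ]
  linarith [one_le_geom_sum ht hm]

lemma two_mul_geom_sum_le (ht : 0 ≤ t) (m : ℕ) :
    2 * ∑ i ∈ range (m + 1), t ^ i ≤ (m + 1) * (1 + t ^ m) := by
  have hpair : ∀ k ∈ range (m + 1), t ^ k + t ^ (m - k) ≤ 1 + t ^ m := by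
    intro k hk
    have hsplit : t ^ k * t ^ (m - k) = t ^ m := by
      rw [← pow_add, Nat.add_sub_cancel' (Nat.lt_succ_iff.mp (mem_range.mp hk))]
    -- `1 + t^m - t^k - t^(m-k) = (1 - t^k) (1 - t^(m-k))`, a product of factors of equal sign
    rcases le_total t 1 with h | h
    · nlinarith [pow_le_one₀ ht h (n := k), pow_le_one₀ ht h (n := m - k)]
    · nlinarith [one_le_pow₀ h (n := k), one_le_pow₀ h (n := m - k)]
  calc 2 * ∑ i ∈ range (m + 1), t ^ i
      = ∑ k ∈ range (m + 1), (t ^ k + t ^ (m - k)) := by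
        have hreflect := sum_range_reflect (fun k => t ^ k) (m + 1)
        simp only [add_tsub_cancel_right] at hreflect
        rw [sum_add_distrib, hreflect, two_mul]
    _ ≤ ∑ _k ∈ range (m + 1), (1 + t ^ m) := sum_le_sum hpair
    _ = (m + 1) * (1 + t ^ m) := by simp [mul_add]

lemma mul_one_add_mul_geom_sum_le {K : Type*} [Field K] [LinearOrder K] [IsStrictOrderedRing K]
    {t : K} (ht : 0 ≤ t) {m : ℕ} (hm : m ≠ 0) :
    ((m : K) + 1) / (2 * m) * ((1 + t) * ∑ i ∈ range m, t ^ i) ≤ ∑ i ∈ range (m + 1), t ^ i := by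
  have hm' : (1 : K) ≤ m := by exact_mod_cast Nat.one_le_iff_ne_zero.2 hm
  rw [one_add_mul_geom_sum_eq, div_mul_eq_mul_div, div_le_iff₀ (by positivity)]
  nlinarith [two_mul_geom_sum_le ht m]

end GeomSum

lemma sqrt_mul_div_sqrt_le {a b c r : ℝ} (hr : 0 ≤ r) (ha : 0 < a) (hb : 0 < b) (h : c * b ≤ a) :
    √c * (r / √a) ≤ r / √b := by
  rw [mul_div_assoc', div_le_div_iff₀ (Real.sqrt_pos.2 ha) (Real.sqrt_pos.2 hb)]
  calc √c * r * √b = r * √(c * b) := by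
        rw [Real.sqrt_mul' _ hb.le]; ring
    _ ≤ r * √a := by gcongr

lemma div_sqrt_geom_sum_bounds {t r : ℝ} (ht : 0 ≤ t) {m : ℕ} (hm : m ≠ 0) (hr : 0 ≤ r) :
    √(((m : ℝ) + 1) / (2 * m)) * (r / √(∑ i ∈ range (m + 1), t ^ i))
        ≤ r / √((1 + t) * ∑ i ∈ range m, t ^ i) ∧
      r / √((1 + t) * ∑ i ∈ range m, t ^ i) ≤ r / √(∑ i ∈ range (m + 1), t ^ i) := by
  have hS : 0 < ∑ i ∈ range (m + 1), t ^ i := geom_sum_pos ht m.succ_ne_zero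
  have hL : 0 < (1 + t) * ∑ i ∈ range m, t ^ i := mul_pos (by positivity) (geom_sum_pos ht hm)
  exact ⟨sqrt_mul_div_sqrt_le hr hS hL (mul_one_add_mul_geom_sum_le ht hm),
    div_le_div_of_nonneg_left hr (Real.sqrt_pos.2 hS)
      (Real.sqrt_le_sqrt (geom_sum_succ_le_one_add_mul ht hm))⟩

lemma lamVec_ne_zero {m : ℕ} (hm : m ≠ 0) (z : ℂ) : lamVec m z ≠ 0 := by
  intro h
  have h₁ := congr_fun h ⟨m - 1, by omega⟩
  simp [lamVec] at h₁

lemma kronVec_ne_zero {m' n : ℕ} {a : Fin m' → ℂ} {b : Fin n → ℂ} (ha : a ≠ 0) (hb : b ≠ 0) :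
    kronVec a b ≠ 0 := by
  have hnorm : ‖toLp 2 (kronVec a b)‖ ≠ 0 := by
    rw [norm_kronVec]
    exact mul_ne_zero (by simpa using ha) (by simpa using hb)
  simpa using hnorm

lemma scaledResidual_linearization {n m : ℕ} {A : Fin (m+1) → Matrix (Fin n) (Fin n) ℂ}
    {B : Fin (1+1) → Matrix (Fin m × Fin n) (Fin m × Fin n) ℂ} {v : Fin m → ℂ}
    (hL : InL1 A B v) (hv : vecNormSq v = 1) (z : ℂ) (x : Fin n → ℂ) :
    scaledResidual B z (kronVec (lamVec m z) x) = ‖toLp 2 (polyEval A z *ᵥ x)‖ /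
      (√((1 + ‖z‖ ^ 2) * ∑ i ∈ range m, (‖z‖ ^ 2) ^ i) * ‖toLp 2 x‖) := by
  have hv1 : ‖toLp 2 v‖ = 1 := by rw [← vecNorm_eq_norm_toLp, vecNorm, hv, Real.sqrt_one]
  rw [scaledResidual, hL, norm_kronVec, hv1, one_mul, norm_kronVec, ← norm_lamVec_sq,
    Real.sqrt_mul (by positivity), Real.sqrt_sq (norm_nonneg _), lamNormSq_eq_geom_sum,
    geom_sum_two, add_comm, mul_assoc]

theorem linearization_backward_error_general {n m : ℕ} (hm : 1 ≤ m)
    (A : Fin (m+1) → Matrix (Fin n) (Fin n) ℂ)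
    (B : Fin (1+1) → Matrix (Fin m × Fin n) (Fin m × Fin n) ℂ)
    (v : Fin m → ℂ) (hv : vecNormSq v = 1) (hL : InL1 A B v)
    (lam : ℂ) (x : Fin n → ℂ) (hx : star x ⬝ᵥ x = 1) :
    (Real.sqrt (((m : ℝ) + 1) / (2 * m)) * eta polyNormF Set.univ lam x A
        ≤ eta polyNormF Set.univ lam (kronVec (lamVec m lam) x) B ∧
      eta polyNormF Set.univ lam (kronVec (lamVec m lam) x) B
        ≤ eta polyNormF Set.univ lam x A) ∧
    (Real.sqrt (((m : ℝ) + 1) / (2 * m)) * eta polyNorm2 Set.univ lam x A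
        ≤ eta polyNorm2 Set.univ lam (kronVec (lamVec m lam) x) B ∧
      eta polyNorm2 Set.univ lam (kronVec (lamVec m lam) x) B
        ≤ eta polyNorm2 Set.univ lam x A) := by
  have hm0 : m ≠ 0 := by omega
  have hx1 : ‖toLp 2 x‖ = 1 := by
    rw [star_dotProduct_self_eq_norm_sq] at hx
    exact (pow_eq_one_iff_of_nonneg (norm_nonneg _) two_ne_zero).1 (by exact_mod_cast hx)
  have hx0 : x ≠ 0 := by rintro rfl; simp at hx1
  have hw0 : kronVec (lamVec m lam) x ≠ 0 := kronVec_ne_zero (lamVec_ne_zero hm0 lam) hx0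
  have bounds := div_sqrt_geom_sum_bounds (sq_nonneg ‖lam‖) hm0
    (norm_nonneg (toLp 2 (polyEval A lam *ᵥ x)))
  rw [eta_polyNormF_eq_scaledResidual A lam hx0, eta_polyNorm2_eq_scaledResidual A lam hx0,
    eta_polyNormF_eq_scaledResidual B lam hw0, eta_polyNorm2_eq_scaledResidual B lam hw0,
    scaledResidual_linearization hL hv, scaledResidual, lamNormSq_eq_geom_sum, hx1, mul_one,
    mul_one]
  exact ⟨bounds, bounds⟩

/-- Backward errors under linearization: for a linearization
`L ∈ 𝕃₁(P)` with normalized right ansatz vector `v`,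
`sqrt((m+1)/(2m))·η(λ,x,P) ≤ η(λ, Λ_{m−1}⊗x, L) ≤ η(λ,x,P)`
(for the Frobenius-based and the spectral-norm-based backward error alike). -/
theorem linearization_backward_error {n m : ℕ} (hm : 1 ≤ m)
    (A : Fin (m+1) → Matrix (Fin n) (Fin n) ℂ)
    (hreg : Regular A) (hlead : A (Fin.last m) ≠ 0)
    (B : Fin (1+1) → Matrix (Fin m × Fin n) (Fin m × Fin n) ℂ)
    (v : Fin m → ℂ) (hv : vecNormSq v = 1) (hL : InL1 A B v)
    (lam : ℂ) (x : Fin n → ℂ) (hx : star x ⬝ᵥ x = 1) :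
    (Real.sqrt (((m : ℝ) + 1) / (2 * m)) * eta polyNormF Set.univ lam x A
        ≤ eta polyNormF Set.univ lam (kronVec (lamVec m lam) x) B ∧
      eta polyNormF Set.univ lam (kronVec (lamVec m lam) x) B
        ≤ eta polyNormF Set.univ lam x A) ∧
    (Real.sqrt (((m : ℝ) + 1) / (2 * m)) * eta polyNorm2 Set.univ lam x A
        ≤ eta polyNorm2 Set.univ lam (kronVec (lamVec m lam) x) B ∧
      eta polyNorm2 Set.univ lam (kronVec (lamVec m lam) x) B
        ≤ eta polyNorm2 Set.univ lam x A) :=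
  linearization_backward_error_general hm A B v hv hL lam x hx
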